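/- Let n ≥ 3 and k be integers with 3 ≤ k ≤ n, K a real number, and let h₁, …, hₙ be real numbers with h₁ + h₂ + ⋯ + hₙ = K. Then f(h₁,…,hₙ) = ((n−2)/(2(n−1))) · K² if and only if h₁ = 0 and h₂ = h₃ = ⋯ = hₙ = K/(n−1). -/

import Mathlib

/-! Let `a = h₁`, `c = K / (n - 1)`, `t = k - 1`, `D = ∑_{i=2}^{k} (hᵢ - c)` and
`Q = ∑_{i ≥ 2} (hᵢ - c)²`. Using `∑ hᵢ = K`,
`2t ((n - 2) / (2(n - 1)) K² - f) = t a² + 2aD + tQ = (a + D)² + (t - 1) a² + (tQ - D²)`.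
Cauchy–Schwarz gives `D² ≤ tQ`, so since `t ≥ 2` this vanishes exactly when `a = 0` and `Q = 0`.
Only the index `1` and the set `{2, …, k}` matter, so the argument is run over any finite index
type, with `i₀` and `J ∌ i₀` in their place. -/

open Finset

/-- The quadratic form `f(h₁,…,hₙ) = Σ_{1≤i<j≤n} hᵢhⱼ − (1/(k−1)) · h₁ · Σ_{i=2}^{k} hᵢ`
(indices written 0-based: `h₁ = h 0`, and `Σ_{i=2}^{k}` becomes the sum over `1 ≤ i < k`). -/
noncomputable def chenF (n k : ℕ) (hn : 3 ≤ n) (h : Fin n → ℝ) : ℝ :=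
  (∑ i : Fin n, ∑ j : Fin n, if i < j then h i * h j else 0)
    - (1 / ((k : ℝ) - 1)) * h ⟨0, by omega⟩ *
      (∑ i : Fin n, if 1 ≤ (i : ℕ) ∧ (i : ℕ) < k then h i else 0)

theorem two_mul_sum_ite_lt_mul {R ι : Type*} [CommRing R] [Fintype ι] [LinearOrder ι]
    (f : ι → R) :
    2 * ∑ i, ∑ j, (if i < j then f i * f j else 0) = (∑ i, f i) ^ 2 - ∑ i, f i ^ 2 := by
  have hswap : ∑ i, ∑ j, (if j < i then f i * f j else 0)
      = ∑ i, ∑ j, (if i < j then f i * f j else 0) := by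
    rw [Finset.sum_comm]
    simp only [mul_comm]
  have hsplit (i j : ι) : f i * f j = (if i < j then f i * f j else 0)
      + (if j < i then f i * f j else 0) + (if i = j then f i * f j else 0) := by
    rcases lt_trichotomy i j with hij | rfl | hij
    · simp [hij, hij.not_gt, hij.ne]
    · simp
    · simp [hij, hij.not_gt, hij.ne']
  rw [sq, sum_mul_sum, sum_congr rfl fun i _ => sum_congr rfl fun j _ => hsplit i j]
  simp only [sum_add_distrib, sum_ite_eq, mem_univ, if_true, sq, hswap]
  ring

theorem mul_sq_add_two_mul_add_mul_eq_zero_iff {t a D Q : ℝ} (ht : 1 < t) (hD : D ^ 2 ≤ t * Q) :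
    t * a ^ 2 + 2 * a * D + t * Q = 0 ↔ a = 0 ∧ Q = 0 := by
  constructor
  · intro h
    have ha : (t - 1) * a ^ 2 ≤ 0 := by nlinarith [sq_nonneg (a + D)]
    obtain rfl : a = 0 := pow_eq_zero_iff two_ne_zero |>.1 <|
      le_antisymm (nonpos_of_mul_nonpos_right ha (sub_pos.2 ht)) (sq_nonneg a)
    exact ⟨rfl, by nlinarith⟩
  · rintro ⟨rfl, rfl⟩
    ring

section PairForm

variable {ι : Type*} [Fintype ι] [DecidableEq ι] {i₀ : ι} {J : Finset ι} {h : ι → ℝ} {K : ℝ}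

theorem two_mul_card_mul_max_sub_pair_form (hK : ∑ i, h i = K)
    (hm : (Fintype.card ι : ℝ) - 1 ≠ 0) (hJ : (#J : ℝ) ≠ 0) :
    2 * #J * (((Fintype.card ι : ℝ) - 2) / (2 * ((Fintype.card ι : ℝ) - 1)) * K ^ 2
        - ((K ^ 2 - ∑ i, h i ^ 2) / 2 - 1 / #J * h i₀ * ∑ i ∈ J, h i))
      = #J * h i₀ ^ 2 + 2 * h i₀ * ∑ i ∈ J, (h i - K / ((Fintype.card ι : ℝ) - 1))
        + #J * ∑ i ∈ univ.erase i₀, (h i - K / ((Fintype.card ι : ℝ) - 1)) ^ 2 := by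
  have hsum : ∑ i ∈ univ.erase i₀, h i = K - h i₀ := by
    rw [← hK, ← add_sum_erase _ _ (mem_univ i₀)]; ring
  have hsum_sq : ∑ i ∈ univ.erase i₀, h i ^ 2 = ∑ i, h i ^ 2 - h i₀ ^ 2 := by
    rw [← add_sum_erase _ _ (mem_univ i₀)]; ring
  have hcard : (#(univ.erase i₀) : ℝ) = (Fintype.card ι : ℝ) - 1 := by
    rw [card_erase_of_mem (mem_univ _), card_univ,
      Nat.cast_sub (Fintype.card_pos_iff.2 ⟨i₀⟩), Nat.cast_one]
  simp only [sub_sq, sum_add_distrib, sum_sub_distrib, ← mul_sum, ← sum_mul, sum_const,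
    nsmul_eq_mul, hsum, hsum_sq, hcard]
  field_simp
  ring

theorem sq_sum_sub_le_card_mul_sum_erase (hJ : i₀ ∉ J) (c : ℝ) :
    (∑ i ∈ J, (h i - c)) ^ 2 ≤ #J * ∑ i ∈ univ.erase i₀, (h i - c) ^ 2 :=
  (sq_sum_le_card_mul_sum_sq ..).trans <| mul_le_mul_of_nonneg_left
    (sum_le_sum_of_subset_of_nonneg (subset_erase.2 ⟨subset_univ J, hJ⟩)
      fun _ _ _ => sq_nonneg _) (Nat.cast_nonneg _)

theorem sum_erase_sub_sq_eq_zero_iff (c : ℝ) :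
    ∑ i ∈ univ.erase i₀, (h i - c) ^ 2 = 0 ↔ ∀ i ≠ i₀, h i = c := by
  rw [sum_eq_zero_iff_of_nonneg fun i _ => sq_nonneg (h i - c)]
  simp [sub_eq_zero]

theorem pair_form_eq_max_iff (hJ : i₀ ∉ J) (hJ2 : 2 ≤ #J) (hK : ∑ i, h i = K) :
    (K ^ 2 - ∑ i, h i ^ 2) / 2 - 1 / #J * h i₀ * ∑ i ∈ J, h i
        = ((Fintype.card ι : ℝ) - 2) / (2 * ((Fintype.card ι : ℝ) - 1)) * K ^ 2 ↔
      h i₀ = 0 ∧ ∀ i ≠ i₀, h i = K / ((Fintype.card ι : ℝ) - 1) := by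
  have hcard : #J ≤ Fintype.card ι - 1 := by
    simpa [card_erase_of_mem] using card_le_card (subset_erase.2 ⟨subset_univ J, hJ⟩)
  have hm : (Fintype.card ι : ℝ) - 1 ≠ 0 := by
    rw [sub_ne_zero]; exact_mod_cast (by omega : Fintype.card ι ≠ 1)
  have ht : (1 : ℝ) < #J := by exact_mod_cast hJ2
  rw [eq_comm, ← sub_eq_zero, ← mul_right_inj' (by positivity : (2 * #J : ℝ) ≠ 0), mul_zero,
    two_mul_card_mul_max_sub_pair_form hK hm (by positivity),
    mul_sq_add_two_mul_add_mul_eq_zero_iff ht (sq_sum_sub_le_card_mul_sum_erase hJ _),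
    sum_erase_sub_sq_eq_zero_iff]

end PairForm

theorem card_filter_one_le_lt_fin {n k : ℕ} (hkn : k ≤ n) :
    #(univ.filter fun i : Fin n => 1 ≤ (i : ℕ) ∧ (i : ℕ) < k) = k - 1 := by
  rw [card_filter, Fin.sum_univ_eq_sum_range (fun j => if 1 ≤ j ∧ j < k then 1 else 0),
    ← card_filter, ← Nat.card_Ico]
  congr 1
  ext j
  simp only [mem_filter, mem_range, mem_Ico]
  omega

theorem chenF_eq_pair_form (n k : ℕ) (hn : 3 ≤ n) (h : Fin n → ℝ) :
    chenF n k hn h = ((∑ i, h i) ^ 2 - ∑ i, h i ^ 2) / 2 - 1 / ((k : ℝ) - 1) * h ⟨0, by omega⟩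
      * ∑ i ∈ univ.filter (fun i : Fin n => 1 ≤ (i : ℕ) ∧ (i : ℕ) < k), h i := by
  rw [chenF, sum_filter, ← two_mul_sum_ite_lt_mul, mul_div_cancel_left₀ _ two_ne_zero]

theorem stmt_1 (n k : ℕ) (hn : 3 ≤ n) (hk : 3 ≤ k) (hkn : k ≤ n)
    (K : ℝ) (h : Fin n → ℝ) (hsum : ∑ i, h i = K) :
    chenF n k hn h = ((n : ℝ) - 2) / (2 * ((n : ℝ) - 1)) * K ^ 2 ↔
      (h ⟨0, by omega⟩ = 0 ∧ ∀ i : Fin n, 1 ≤ (i : ℕ) → h i = K / ((n : ℝ) - 1)) := by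
  set J := univ.filter fun i : Fin n => 1 ≤ (i : ℕ) ∧ (i : ℕ) < k
  have hJ : (⟨0, by omega⟩ : Fin n) ∉ J := by simp [J]
  have hJcard : ((#J : ℕ) : ℝ) = (k : ℝ) - 1 := by
    rw [card_filter_one_le_lt_fin hkn, Nat.cast_sub (by omega), Nat.cast_one]
  have key := pair_form_eq_max_iff hJ (by rw [card_filter_one_le_lt_fin hkn]; omega) hsum
  rw [Fintype.card_fin, hJcard] at key
  rw [chenF_eq_pair_form, hsum, key]
  simp only [ne_eq, Fin.ext_iff, Nat.one_le_iff_ne_zero]
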